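/- arXiv:2006.05320 — 3 statements merged into one kernel-verified Lean document; each statement's English description precedes it below -/
import Mathlib

section
/- Let ν and μ be probability measures on a finite set A with μ giving positive mass to every point. Then ∑_{a∈A} ν({a}) |log(ν({a})/μ({a}))| ≤ H(ν|μ) + 2/e, where H(ν|μ) = ∑_{a∈A} ν({a}) log(ν({a})/μ({a})) is the relative entropy (with the convention 0 log 0 = 0). -/
lemma neg_mul_log_le_inv_exp (x : ℝ) (hx : 0 < x) :
    -(x * Real.log x) ≤ 1 / Real.exp 1 := by
  have h1 : Real.log (x⁻¹ / Real.exp 1) ≤ x⁻¹ / Real.exp 1 - 1 :=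
    Real.log_le_sub_one_of_pos (by positivity)
  rw [Real.log_div (by positivity) (Real.exp_ne_zero 1), Real.log_exp,
    Real.log_inv] at h1
  have hx' : x ≠ 0 := hx.ne'
  have he : 0 < Real.exp 1 := Real.exp_pos 1
  -- -log x - 1 ≤ x⁻¹ / e - 1, so -log x ≤ x⁻¹/e, multiply by x
  have h2 : -Real.log x ≤ x⁻¹ / Real.exp 1 := by linarith
  have h3 : x * (-Real.log x) ≤ x * (x⁻¹ / Real.exp 1) :=
    mul_le_mul_of_nonneg_left h2 hx.le
  calc -(x * Real.log x) = x * (-Real.log x) := by ring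
    _ ≤ x * (x⁻¹ / Real.exp 1) := h3
    _ = 1 / Real.exp 1 := by field_simp

theorem abs_relative_entropy_bound
    {A : Type*} [Fintype A] (ν μ : A → ℝ)
    (hν0 : ∀ a, 0 ≤ ν a) (hμ0 : ∀ a, 0 < μ a)
    (hν1 : ∑ a, ν a = 1) (hμ1 : ∑ a, μ a = 1) :
    ∑ a, ν a * |Real.log (ν a / μ a)| ≤
      (∑ a, ν a * Real.log (ν a / μ a)) + 2 / Real.exp 1 := by
  have he : 0 < Real.exp 1 := Real.exp_pos 1
  have key : ∀ a, ν a * |Real.log (ν a / μ a)| - ν a * Real.log (ν a / μ a)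
      ≤ 2 / Real.exp 1 * μ a := by
    intro a
    have hμ := hμ0 a
    rcases eq_or_lt_of_le (hν0 a) with h | h
    · rw [← h]; simp; positivity
    · have hr0 : 0 < ν a / μ a := div_pos h hμ
      rcases le_or_gt 0 (Real.log (ν a / μ a)) with hl | hl
      · rw [abs_of_nonneg hl]; simp; positivity
      · rw [abs_of_neg hl]
        have haux := neg_mul_log_le_inv_exp (ν a / μ a) hr0
        have hnu : ν a = (ν a / μ a) * μ a := by field_simp
        have h4 : μ a * -(ν a / μ a * Real.log (ν a / μ a)) ≤ μ a * (1 / Real.exp 1) :=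
          mul_le_mul_of_nonneg_left haux hμ.le
        calc ν a * -Real.log (ν a / μ a) - ν a * Real.log (ν a / μ a)
            = 2 * (μ a * -(ν a / μ a * Real.log (ν a / μ a))) := by
              field_simp; ring
          _ ≤ 2 * (μ a * (1 / Real.exp 1)) := by linarith
          _ = 2 / Real.exp 1 * μ a := by ring
  have hsum : ∑ a, (ν a * |Real.log (ν a / μ a)| - ν a * Real.log (ν a / μ a))
      ≤ ∑ a, 2 / Real.exp 1 * μ a :=
    Finset.sum_le_sum (fun a _ => key a)
  rw [Finset.sum_sub_distrib, ← Finset.mul_sum, hμ1, mul_one] at hsum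
  linarith
end

section
/- Let μ be a shift-invariant probability measure on Ω = S^{ℤ^d} (S finite) satisfying GCB(D): for every local function F, E_μ[exp(F − E_μ F)] ≤ exp(D ∑_{x} δ_x(F)²). Then μ is mixing: for all local functions f, g, lim_{|x|→∞} ∫ f · (g ∘ θ_x) dμ = (∫ f dμ)(∫ g dμ). -/
/-!
For a local `g` and a finite set `V` of sites, the ergodic sum `F_V = ∑_{x ∈ V} g ∘ θ_x` is
local, and changing one spin moves it by at most `2 ‖g‖_∞ |Λ|` (`Λ` the support of `g`) on at most
`|V| |Λ|` sites, so `∑_y δ_y(F_V)² = O(|V|)`. GCB applied to `± F_V / √|V|` then bounds both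
exponential moments of `(F_V - 𝔼 F_V) / √|V|` uniformly in `V`, whence
`𝔼 |F_V - 𝔼 F_V| = O(√|V|)`. As `∑_{x ∈ V} Cov(f, g ∘ θ_x) = 𝔼[f (F_V - 𝔼 F_V)]`, all these
covariance sums are `O(√|V|)`. If infinitely many covariances exceeded `ε`, a set `V` of them
would give a sum `≥ ε |V|`, which is impossible for `|V|` large.
-/

open MeasureTheory Filter

/-- The shift action: `(θ_x ω)_y = ω_{y - x}`. -/
def shift {S : Type*} {d : ℕ} (x : Fin d → ℤ) (ω : (Fin d → ℤ) → S) : (Fin d → ℤ) → S :=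
  fun y => ω (y - x)

/-- The oscillation of `F : S^{ℤ^d} → ℝ` at the site `x`. -/
noncomputable def osc {S : Type*} {d : ℕ} (f : ((Fin d → ℤ) → S) → ℝ) (x : Fin d → ℤ) : ℝ :=
  sSup {r | ∃ ω η : (Fin d → ℤ) → S, (∀ y, y ≠ x → ω y = η y) ∧ r = |f ω - f η|}

/-- A local function: it depends only on finitely many coordinates. -/
def IsLocal {S : Type*} {d : ℕ} (f : ((Fin d → ℤ) → S) → ℝ) : Prop :=
  ∃ Λ : Finset (Fin d → ℤ), ∀ ω η : (Fin d → ℤ) → S, (∀ x ∈ Λ, ω x = η x) → f ω = f η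

section

open Finset Real

variable {S : Type*} {d : ℕ}

section Oscillation

lemma osc_nonneg (f : ((Fin d → ℤ) → S) → ℝ) (x : Fin d → ℤ) : 0 ≤ osc f x :=
  Real.sSup_nonneg fun _ ⟨_, _, _, hr⟩ => hr ▸ abs_nonneg _

lemma osc_le {f : ((Fin d → ℤ) → S) → ℝ} {x : Fin d → ℤ} {a : ℝ} (ha : 0 ≤ a)
    (h : ∀ ω η : (Fin d → ℤ) → S, (∀ y, y ≠ x → ω y = η y) → |f ω - f η| ≤ a) :
    osc f x ≤ a :=
  Real.sSup_le (fun _ ⟨ω, η, hωη, hr⟩ => hr ▸ h ω η hωη) ha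

lemma osc_eq_zero_of_dependsOn {f : ((Fin d → ℤ) → S) → ℝ} {s : Set (Fin d → ℤ)}
    {x : Fin d → ℤ} (hf : DependsOn f s) (hx : x ∉ s) : osc f x = 0 := by
  refine le_antisymm (osc_le le_rfl fun ω η hωη => ?_) (osc_nonneg f x)
  rw [hf fun y hy => hωη y (ne_of_mem_of_not_mem hy hx), sub_self, abs_zero]

lemma tsum_osc_sq_le {f : ((Fin d → ℤ) → S) → ℝ} {W : Finset (Fin d → ℤ)} {a : ℝ}
    (hf : DependsOn f W) (ha : ∀ y, osc f y ≤ a) :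
    ∑' y, osc f y ^ 2 ≤ #W * a ^ 2 := by
  rw [tsum_eq_sum fun y hy => by rw [osc_eq_zero_of_dependsOn hf hy, zero_pow two_ne_zero]]
  calc ∑ y ∈ W, osc f y ^ 2 ≤ ∑ _y ∈ W, a ^ 2 :=
        sum_le_sum fun y _ => pow_le_pow_left₀ (osc_nonneg f y) (ha y) 2
    _ = #W * a ^ 2 := by rw [sum_const, nsmul_eq_mul]

end Oscillation

section Local

variable {f : ((Fin d → ℤ) → S) → ℝ}

lemma IsLocal.exists_dependsOn (hf : IsLocal f) :
    ∃ Λ : Finset (Fin d → ℤ), DependsOn f Λ :=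
  let ⟨Λ, hΛ⟩ := hf; ⟨Λ, fun ω η h => hΛ ω η h⟩

lemma isLocal_of_dependsOn {Λ : Finset (Fin d → ℤ)} (hf : DependsOn f Λ) : IsLocal f :=
  ⟨Λ, fun _ _ h => hf h⟩

lemma IsLocal.comp (hf : IsLocal f) (φ : ℝ → ℝ) : IsLocal fun ω => φ (f ω) :=
  let ⟨Λ, hΛ⟩ := hf; ⟨Λ, fun ω η h => congrArg φ (hΛ ω η h)⟩

lemma IsLocal.mul {g : ((Fin d → ℤ) → S) → ℝ} (hf : IsLocal f) (hg : IsLocal g) :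
    IsLocal fun ω => f ω * g ω := by
  obtain ⟨Λ, hΛ⟩ := hf
  obtain ⟨Λ', hΛ'⟩ := hg
  refine ⟨Λ ∪ Λ', fun ω η h => ?_⟩
  exact congrArg₂ (· * ·) (hΛ ω η fun x hx => h x (mem_union_left _ hx))
    (hΛ' ω η fun x hx => h x (mem_union_right _ hx))

lemma IsLocal.finite_range [Finite S] (hf : IsLocal f) : (Set.range f).Finite := by
  obtain ⟨Λ, hΛ⟩ := hf.exists_dependsOn
  obtain ⟨G, rfl⟩ := dependsOn_iff_exists_comp.1 hΛ
  exact (Set.finite_range G).subset (Set.range_comp_subset_range _ _)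

lemma IsLocal.exists_abs_le [Finite S] (hf : IsLocal f) : ∃ M, 0 ≤ M ∧ ∀ ω, |f ω| ≤ M := by
  obtain ⟨M, hM⟩ := (hf.finite_range.image abs).bddAbove
  exact ⟨max M 0, le_max_right _ _, fun ω => (hM ⟨f ω, ⟨ω, rfl⟩, rfl⟩).trans (le_max_left _ _)⟩

lemma IsLocal.integrable [Finite S] [MeasurableSpace S] {μ : Measure ((Fin d → ℤ) → S)}
    [IsFiniteMeasure μ] (hf : IsLocal f) (hfm : Measurable f) : Integrable f μ :=
  let ⟨M, _, hM⟩ := hf.exists_abs_le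
  .of_bound hfm.aestronglyMeasurable M (ae_of_all _ hM)

end Local

section Shift

variable [MeasurableSpace S] {μ : Measure ((Fin d → ℤ) → S)} {g : ((Fin d → ℤ) → S) → ℝ}

@[fun_prop]
lemma measurable_shift (x : Fin d → ℤ) : Measurable (shift (S := S) x) :=
  measurable_pi_lambda _ fun y => measurable_pi_apply (y - x)

lemma integral_comp_shift {x : Fin d → ℤ} (hinv : μ.map (shift x) = μ)
    (hg : AEStronglyMeasurable g μ) : ∫ ω, g (shift x ω) ∂μ = ∫ ω, g ω ∂μ := by
  conv_rhs => rw [← hinv]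
  exact (integral_map (measurable_shift x).aemeasurable (by rwa [hinv])).symm

lemma integrable_comp_shift {x : Fin d → ℤ} (hinv : μ.map (shift x) = μ)
    (hg : Integrable g μ) : Integrable (fun ω => g (shift x ω)) μ :=
  MeasurePreserving.integrable_comp_of_integrable ⟨measurable_shift x, hinv⟩ hg

end Shift

section ErgodicSum

variable {g : ((Fin d → ℤ) → S) → ℝ} {Λ V : Finset (Fin d → ℤ)}

def ergodicSum (g : ((Fin d → ℤ) → S) → ℝ) (V : Finset (Fin d → ℤ))
    (ω : (Fin d → ℤ) → S) : ℝ :=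
  ∑ x ∈ V, g (shift x ω)

lemma dependsOn_comp_shift (hg : DependsOn g Λ) (x : Fin d → ℤ) :
    DependsOn (fun ω => g (shift x ω)) (Λ.image (· - x)) :=
  fun _ _ h => hg fun _ ha => h _ (mem_image_of_mem _ ha)

lemma dependsOn_ergodicSum (hg : DependsOn g Λ) :
    DependsOn (ergodicSum g V) (V.biUnion fun x => Λ.image (· - x)) :=
  fun _ _ h => sum_congr rfl fun x hx =>
    dependsOn_comp_shift hg x fun _ hy => h _ (mem_biUnion.2 ⟨x, hx, hy⟩)

lemma IsLocal.ergodicSum (hg : IsLocal g) : IsLocal (ergodicSum g V) := by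
  obtain ⟨Λ, hΛ⟩ := hg.exists_dependsOn
  exact isLocal_of_dependsOn (dependsOn_ergodicSum hΛ)

-- Changing `ω` at the single site `y` only affects the terms with `y + x ∈ Λ`.
lemma abs_ergodicSum_sub_le {M : ℝ} (hg : DependsOn g Λ) (hgM : ∀ ω, |g ω| ≤ M)
    {y : Fin d → ℤ} {ω η : (Fin d → ℤ) → S} (hωη : ∀ z, z ≠ y → ω z = η z) :
    |ergodicSum g V ω - ergodicSum g V η| ≤ #Λ * (2 * M) := by
  set T := Λ.image (· - y)
  have hvanish : ∀ x ∈ V, x ∉ V ∩ T → g (shift x ω) - g (shift x η) = 0 := by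
    refine fun x hxV hxT => sub_eq_zero.2 (hg fun a ha => hωη _ fun hay => hxT ?_)
    exact mem_inter.2 ⟨hxV, mem_image.2 ⟨a, ha, by rw [← hay]; abel⟩⟩
  rw [ergodicSum, ergodicSum, ← sum_sub_distrib, ← sum_subset inter_subset_left hvanish]
  calc |∑ x ∈ V ∩ T, (g (shift x ω) - g (shift x η))|
      ≤ ∑ x ∈ V ∩ T, |g (shift x ω) - g (shift x η)| := abs_sum_le_sum_abs _ _
    _ ≤ #(V ∩ T) • (2 * M) := sum_le_card_nsmul _ _ _ fun x _ =>
        (abs_sub _ _).trans (by linarith [hgM (shift x ω), hgM (shift x η)])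
    _ ≤ #Λ * (2 * M) := by
        have hM : 0 ≤ M := (abs_nonneg _).trans (hgM ω)
        have hcard : (#(V ∩ T) : ℝ) ≤ #Λ := by
          exact_mod_cast (card_le_card inter_subset_right).trans card_image_le
        rw [nsmul_eq_mul]
        exact mul_le_mul_of_nonneg_right hcard (by positivity)

lemma tsum_osc_sq_const_mul_ergodicSum_le {M : ℝ} (hg : DependsOn g Λ) (hM : 0 ≤ M)
    (hgM : ∀ ω, |g ω| ≤ M) (c : ℝ) :
    ∑' y, osc (fun ω => c * ergodicSum g V ω) y ^ 2 ≤
      c ^ 2 * #V * (#Λ * (#Λ * (2 * M)) ^ 2) := by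
  have hosc : ∀ y, osc (fun ω => c * ergodicSum g V ω) y ≤ |c| * (#Λ * (2 * M)) :=
    fun y => osc_le (by positivity) fun ω η hωη => by
      rw [← mul_sub, abs_mul]
      exact mul_le_mul_of_nonneg_left (abs_ergodicSum_sub_le hg hgM hωη) (abs_nonneg c)
  have hdep : DependsOn (fun ω => c * ergodicSum g V ω) ↑(V.biUnion fun x => Λ.image (· - x)) :=
    fun _ _ h => congrArg (c * ·) (dependsOn_ergodicSum hg h)
  have hcard : (#(V.biUnion fun x => Λ.image (· - x)) : ℝ) ≤ #V * #Λ := by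
    exact_mod_cast card_biUnion_le_card_mul _ _ _ fun _ _ => card_image_le
  calc ∑' y, osc (fun ω => c * ergodicSum g V ω) y ^ 2
      ≤ #(V.biUnion fun x => Λ.image (· - x)) * (|c| * (#Λ * (2 * M))) ^ 2 :=
        tsum_osc_sq_le hdep hosc
    _ ≤ #V * #Λ * (|c| * (#Λ * (2 * M))) ^ 2 := by gcongr
    _ = c ^ 2 * #V * (#Λ * (#Λ * (2 * M)) ^ 2) := by rw [mul_pow, sq_abs]; ring

end ErgodicSum

section Covariance

variable [MeasurableSpace S] {μ : Measure ((Fin d → ℤ) → S)} {f g : ((Fin d → ℤ) → S) → ℝ}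
  {V : Finset (Fin d → ℤ)}

@[fun_prop]
lemma measurable_ergodicSum (hg : Measurable g) (V : Finset (Fin d → ℤ)) :
    Measurable (ergodicSum g V) :=
  Finset.measurable_sum _ fun x _ => hg.comp (measurable_shift x)

lemma integral_ergodicSum (hinv : ∀ x : Fin d → ℤ, μ.map (shift x) = μ) (hg : Integrable g μ) :
    ∫ ω, ergodicSum g V ω ∂μ = #V * ∫ ω, g ω ∂μ := by
  simp only [ergodicSum]
  rw [integral_finsetSum V fun x _ => integrable_comp_shift (hinv x) hg,
    sum_congr rfl fun x _ => integral_comp_shift (hinv x) hg.aestronglyMeasurable,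
    sum_const, nsmul_eq_mul]

lemma sum_covariance_comp_shift_eq_integral
    (hinv : ∀ x : Fin d → ℤ, μ.map (shift x) = μ) (hf : Integrable f μ) (hg : Integrable g μ)
    (hfg : ∀ x, Integrable (fun ω => f ω * g (shift x ω)) μ) :
    ∑ x ∈ V, ((∫ ω, f ω * g (shift x ω) ∂μ) - (∫ ω, f ω ∂μ) * ∫ ω, g ω ∂μ) =
      ∫ ω, f ω * (ergodicSum g V ω - ∫ η, ergodicSum g V η ∂μ) ∂μ := by
  have hfF : Integrable (fun ω => f ω * ergodicSum g V ω) μ := by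
    simp only [ergodicSum, mul_sum]
    exact integrable_finsetSum V fun x _ => hfg x
  simp only [mul_sub]
  rw [integral_sub hfF (hf.mul_const _), integral_mul_const, integral_ergodicSum hinv hg,
    sum_sub_distrib, sum_const, nsmul_eq_mul]
  simp only [ergodicSum, mul_sum]
  rw [integral_finsetSum V fun x _ => hfg x]
  ring

end Covariance

lemma abs_le_exp_add_exp_neg (u : ℝ) : |u| ≤ exp u + exp (-u) := by
  rcases abs_cases u with ⟨hu, -⟩ | ⟨hu, -⟩ <;> rw [hu]
  · linarith [add_one_le_exp u, exp_pos (-u)]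
  · linarith [add_one_le_exp (-u), exp_pos u]

lemma integral_abs_le_of_integral_exp_le {Ω : Type*} [MeasurableSpace Ω] {μ : Measure Ω}
    {X : Ω → ℝ} {t A : ℝ} (ht : 0 < t)
    (hpos : Integrable (fun ω => exp (t * X ω)) μ)
    (hneg : Integrable (fun ω => exp (-(t * X ω))) μ)
    (hposA : ∫ ω, exp (t * X ω) ∂μ ≤ A) (hnegA : ∫ ω, exp (-(t * X ω)) ∂μ ≤ A) :
    ∫ ω, |X ω| ∂μ ≤ 2 * A / t := by
  rw [le_div_iff₀ ht, mul_comm, ← integral_const_mul]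
  calc ∫ ω, t * |X ω| ∂μ ≤ ∫ ω, (exp (t * X ω) + exp (-(t * X ω))) ∂μ := by
        refine integral_mono_of_nonneg (ae_of_all _ fun ω => by positivity) (hpos.add hneg)
          (ae_of_all _ fun ω => ?_)
        simpa only [abs_mul, abs_of_pos ht] using abs_le_exp_add_exp_neg (t * X ω)
    _ ≤ 2 * A := by rw [integral_add hpos hneg]; linarith

def GaussianConcentrationBound [MeasurableSpace S] (μ : Measure ((Fin d → ℤ) → S)) (D : ℝ) :
    Prop :=
  ∀ F : ((Fin d → ℤ) → S) → ℝ, IsLocal F →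
    ∫ ω, exp (F ω - ∫ η, F η ∂μ) ∂μ ≤ exp (D * ∑' x : Fin d → ℤ, osc F x ^ 2)

section Mixing

variable [MeasurableSpace S] {μ : Measure ((Fin d → ℤ) → S)} {D : ℝ}
  {f g : ((Fin d → ℤ) → S) → ℝ} {Λ V : Finset (Fin d → ℤ)} {M : ℝ}

lemma GaussianConcentrationBound.integral_exp_ergodicSum_le
    (hGCB : GaussianConcentrationBound μ D) (hD : 0 ≤ D) (hg : DependsOn g Λ) (hM : 0 ≤ M)
    (hgM : ∀ ω, |g ω| ≤ M) (c : ℝ) :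
    ∫ ω, exp (c * (ergodicSum g V ω - ∫ η, ergodicSum g V η ∂μ)) ∂μ ≤
      exp (D * (c ^ 2 * #V * (#Λ * (#Λ * (2 * M)) ^ 2))) := by
  have hloc : IsLocal fun ω => c * ergodicSum g V ω :=
    (isLocal_of_dependsOn hg).ergodicSum.comp (c * ·)
  calc ∫ ω, exp (c * (ergodicSum g V ω - ∫ η, ergodicSum g V η ∂μ)) ∂μ
      = ∫ ω, exp (c * ergodicSum g V ω - ∫ η, c * ergodicSum g V η ∂μ) ∂μ := by
        simp only [integral_const_mul, mul_sub]
    _ ≤ _ := hGCB _ hloc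
    _ ≤ _ := by
        gcongr
        exact tsum_osc_sq_const_mul_ergodicSum_le hg hM hgM c

theorem abs_sum_covariance_comp_shift_le [Finite S] [IsProbabilityMeasure μ]
    (hinv : ∀ x : Fin d → ℤ, μ.map (shift x) = μ) (hGCB : GaussianConcentrationBound μ D)
    (hD : 0 ≤ D) (hf : IsLocal f) (hfm : Measurable f) {Mf : ℝ} (hMf : 0 ≤ Mf)
    (hfM : ∀ ω, |f ω| ≤ Mf)
    (hg : DependsOn g Λ) (hgm : Measurable g) (hM : 0 ≤ M) (hgM : ∀ ω, |g ω| ≤ M) :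
    |∑ x ∈ V, ((∫ ω, f ω * g (shift x ω) ∂μ) - (∫ ω, f ω ∂μ) * ∫ ω, g ω ∂μ)| ≤
      Mf * (2 * exp (D * (#Λ * (#Λ * (2 * M)) ^ 2))) * √(#V : ℝ) := by
  rcases V.eq_empty_or_nonempty with rfl | hV
  · simp
  set K := #Λ * (#Λ * (2 * M)) ^ 2
  set X := fun ω => ergodicSum g V ω - ∫ η, ergodicSum g V η ∂μ
  have hgl : IsLocal g := isLocal_of_dependsOn hg
  have hXl : IsLocal X := hgl.ergodicSum.comp (· - _)
  have hXm : Measurable X := by fun_prop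
  have hVpos : (0 : ℝ) < #V := by exact_mod_cast hV.card_pos
  set t := (√(#V : ℝ))⁻¹
  have ht : 0 < t := by positivity
  have htV : t ^ 2 * #V = 1 := by
    rw [inv_pow, sq_sqrt hVpos.le, inv_mul_cancel₀ hVpos.ne']
  have hexp (c : ℝ) : ∫ ω, exp (c * X ω) ∂μ ≤ exp (D * (c ^ 2 * #V * K)) :=
    hGCB.integral_exp_ergodicSum_le hD hg hM hgM c
  have hXabs : ∫ ω, |X ω| ∂μ ≤ 2 * exp (D * K) / t :=
    integral_abs_le_of_integral_exp_le ht
      ((hXl.comp fun u => exp (t * u)).integrable (by fun_prop))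
      ((hXl.comp fun u => exp (-(t * u))).integrable (by fun_prop))
      (by simpa only [htV, one_mul] using hexp t)
      (by simpa only [neg_mul, neg_sq, htV, one_mul] using hexp (-t))
  have hfM' : ∀ ω, |f ω * X ω| ≤ Mf * |X ω| := fun ω => by
    rw [abs_mul]; exact mul_le_mul_of_nonneg_right (hfM ω) (abs_nonneg _)
  rw [sum_covariance_comp_shift_eq_integral hinv (hf.integrable hfm) (hgl.integrable hgm)
    fun x => (hf.mul (isLocal_of_dependsOn (dependsOn_comp_shift hg x))).integrable
      (by fun_prop)]
  calc |∫ ω, f ω * X ω ∂μ| ≤ ∫ ω, |f ω * X ω| ∂μ := abs_integral_le_integral_abs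
    _ ≤ ∫ ω, Mf * |X ω| ∂μ :=
        integral_mono_of_nonneg (ae_of_all _ fun _ => abs_nonneg _)
          ((hXl.integrable hXm).abs.const_mul Mf) (ae_of_all _ hfM')
    _ = Mf * ∫ ω, |X ω| ∂μ := integral_const_mul _ _
    _ ≤ Mf * (2 * exp (D * K) / t) := by gcongr
    _ = Mf * (2 * exp (D * K)) * √(#V : ℝ) := by rw [div_inv_eq_mul]; ring

end Mixing

lemma finite_setOf_le_of_sum_le_mul_sqrt {ι : Type*} {c : ι → ℝ} {B ε : ℝ} (hε : 0 < ε)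
    (h : ∀ V : Finset ι, ∑ x ∈ V, c x ≤ B * √(#V : ℝ)) : {x | ε ≤ c x}.Finite := by
  by_contra hinf
  obtain ⟨V, hVsub, hVcard⟩ := Set.Infinite.exists_subset_card_eq hinf (⌈(B / ε) ^ 2⌉₊ + 1)
  have hlarge : B < √(#V : ℝ) * ε := by
    refine (div_lt_iff₀ hε).1 (lt_sqrt_of_sq_lt ?_)
    rw [hVcard]
    push_cast
    linarith [Nat.le_ceil ((B / ε) ^ 2)]
  have hpos : 0 < √(#V : ℝ) := sqrt_pos.2 (by rw [hVcard]; positivity)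
  refine lt_irrefl ((#V : ℝ) * ε) ?_
  calc (#V : ℝ) * ε = ∑ _x ∈ V, ε := by rw [sum_const, nsmul_eq_mul]
    _ ≤ ∑ x ∈ V, c x := sum_le_sum fun x hx => hVsub hx
    _ ≤ B * √(#V : ℝ) := h V
    _ < √(#V : ℝ) * ε * √(#V : ℝ) := mul_lt_mul_of_pos_right hlarge hpos
    _ = #V * ε := by rw [mul_right_comm, mul_self_sqrt (Nat.cast_nonneg _)]

lemma tendsto_cofinite_zero_of_abs_sum_le_mul_sqrt {ι : Type*} {c : ι → ℝ} {B : ℝ}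
    (h : ∀ V : Finset ι, |∑ x ∈ V, c x| ≤ B * √(#V : ℝ)) : Tendsto c cofinite (nhds 0) := by
  refine tendsto_order.2
    ⟨fun a ha => eventually_cofinite.2 ?_, fun a ha => eventually_cofinite.2 ?_⟩
  · simpa only [not_lt, neg_le_neg_iff] using finite_setOf_le_of_sum_le_mul_sqrt (c := (- c ·))
      (neg_pos.2 ha) fun V => by rw [sum_neg_distrib]; exact (neg_le_abs _).trans (h V)
  · simpa only [not_lt] using
      finite_setOf_le_of_sum_le_mul_sqrt ha fun V => (le_abs_self _).trans (h V)

end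

theorem gcb_implies_mixing_general
    {S : Type*} [Fintype S] [MeasurableSpace S] {d : ℕ}
    (μ : Measure ((Fin d → ℤ) → S)) [IsProbabilityMeasure μ]
    (hinv : ∀ x : Fin d → ℤ, μ.map (shift x) = μ)
    (D : ℝ) (hD : 0 < D)
    (hGCB : ∀ F : ((Fin d → ℤ) → S) → ℝ, IsLocal F →
      ∫ ω, Real.exp (F ω - ∫ η, F η ∂μ) ∂μ ≤
        Real.exp (D * ∑' x : Fin d → ℤ, osc F x ^ 2))
    (f g : ((Fin d → ℤ) → S) → ℝ) (hf : IsLocal f) (hg : IsLocal g)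
    (hfm : Measurable f) (hgm : Measurable g) :
    Tendsto (fun x : Fin d → ℤ => ∫ ω, f ω * g (shift x ω) ∂μ) cofinite
      (nhds ((∫ ω, f ω ∂μ) * ∫ ω, g ω ∂μ)) := by
  obtain ⟨Λ, hgΛ⟩ := hg.exists_dependsOn
  obtain ⟨Mf, hMf, hfM⟩ := hf.exists_abs_le
  obtain ⟨Mg, hMg, hgM⟩ := hg.exists_abs_le
  rw [← tendsto_sub_nhds_zero_iff]
  exact tendsto_cofinite_zero_of_abs_sum_le_mul_sqrt fun _ =>
    abs_sum_covariance_comp_shift_le hinv hGCB hD.le hf hfm hMf hfM hgΛ hgm hMg hgM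

theorem gcb_implies_mixing
    {S : Type*} [Fintype S] [MeasurableSpace S] [MeasurableSingletonClass S] {d : ℕ}
    (μ : Measure ((Fin d → ℤ) → S)) [IsProbabilityMeasure μ]
    (hinv : ∀ x : Fin d → ℤ, μ.map (shift x) = μ)
    (D : ℝ) (hD : 0 < D)
    (hGCB : ∀ F : ((Fin d → ℤ) → S) → ℝ, IsLocal F →
      ∫ ω, Real.exp (F ω - ∫ η, F η ∂μ) ∂μ ≤
        Real.exp (D * ∑' x : Fin d → ℤ, osc F x ^ 2))
    (f g : ((Fin d → ℤ) → S) → ℝ) (hf : IsLocal f) (hg : IsLocal g)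
    (hfm : Measurable f) (hgm : Measurable g) :
    Tendsto (fun x : Fin d → ℤ => ∫ ω, f ω * g (shift x ω) ∂μ) cofinite
      (nhds ((∫ ω, f ω ∂μ) * ∫ ω, g ω ∂μ)) :=
  gcb_implies_mixing_general μ hinv D hD hGCB f g hf hg hfm hgm
end

section
/- Let μ, ν be probability measures on a finite set A with μ positive everywhere, let ρ > 0, and suppose the relative entropy satisfies H(ν|μ) + 2/e ≤ ρ² . Then the set G = {a ∈ A : e^{−ρ} ν({a}) ≤ μ({a}) ≤ e^{ρ} ν({a})} satisfies ν(G) ≥ 1 − ρ. -/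
open scoped Classical

open Finset Real

/-- With `s = log (y / x)` one has `x = y * exp (-s)`, so `x * s = y * (s * exp (-s)) ≤ y / e`. -/
lemma neg_mul_log_div_le {x y : ℝ} (hx : 0 ≤ x) (hy : 0 < y) :
    -(x * log (x / y)) ≤ y / exp 1 := by
  rcases hx.eq_or_lt with rfl | hx
  · simp only [zero_div, log_zero, mul_zero, neg_zero]
    positivity
  set s := log (y / x) with hs
  have hlog : log (x / y) = -s := by rw [hs, ← log_inv, inv_div]
  have hexp : exp (-s) = x / y := by
    rw [exp_neg, exp_log (div_pos hy hx), inv_div]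
  calc -(x * log (x / y)) = y * (s * exp (-s)) := by
        rw [hlog, hexp]
        field_simp
    _ ≤ y * exp (-1) := mul_le_mul_of_nonneg_left (mul_exp_neg_le_exp_neg_one s) hy.le
    _ = y / exp 1 := by rw [exp_neg, div_eq_mul_inv]

lemma mul_abs_log_div_le {x y : ℝ} (hx : 0 ≤ x) (hy : 0 < y) :
    x * |log (x / y)| ≤ x * log (x / y) + 2 * (y / exp 1) := by
  have hneg := neg_mul_log_div_le hx hy
  rw [← abs_of_nonneg hx, ← abs_mul, abs_of_nonneg hx, abs_le']
  constructor <;> linarith [div_nonneg hy.le (exp_pos 1).le]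

lemma sum_mul_abs_log_div_le {A : Type*} [Fintype A] {ν μ : A → ℝ}
    (hν0 : ∀ a, 0 ≤ ν a) (hμ0 : ∀ a, 0 < μ a) (hμ1 : ∑ a, μ a = 1) :
    ∑ a, ν a * |log (ν a / μ a)| ≤ ∑ a, ν a * log (ν a / μ a) + 2 / exp 1 := by
  calc ∑ a, ν a * |log (ν a / μ a)|
      ≤ ∑ a, (ν a * log (ν a / μ a) + 2 * (μ a / exp 1)) :=
        sum_le_sum fun a _ => mul_abs_log_div_le (hν0 a) (hμ0 a)
    _ = ∑ a, ν a * log (ν a / μ a) + 2 / exp 1 := by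
        rw [sum_add_distrib, ← mul_sum, ← sum_div, hμ1, mul_one_div]

lemma abs_log_div_le_iff {x y ρ : ℝ} (hx : 0 < x) (hy : 0 < y) :
    |log (x / y)| ≤ ρ ↔ exp (-ρ) * x ≤ y ∧ y ≤ exp ρ * x := by
  rw [abs_le, le_log_iff_exp_le (div_pos hx hy), log_le_iff_le_exp (div_pos hx hy),
    le_div_iff₀ hy, div_le_iff₀ hy, exp_neg, inv_mul_le_iff₀ (exp_pos ρ),
    inv_mul_le_iff₀ (exp_pos ρ), and_comm]

theorem small_relative_entropy_implies_good_set
    {A : Type*} [Fintype A] (ν μ : A → ℝ)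
    (hν0 : ∀ a, 0 ≤ ν a) (hμ0 : ∀ a, 0 < μ a)
    (hν1 : ∑ a, ν a = 1) (hμ1 : ∑ a, μ a = 1)
    (ρ : ℝ) (hρ : 0 < ρ)
    (hH : (∑ a, ν a * Real.log (ν a / μ a)) + 2 / Real.exp 1 ≤ ρ ^ 2) :
    1 - ρ ≤ ∑ a ∈ Finset.univ.filter
      (fun a => Real.exp (-ρ) * ν a ≤ μ a ∧ μ a ≤ Real.exp ρ * ν a), ν a := by
  set G := univ.filter fun a => exp (-ρ) * ν a ≤ μ a ∧ μ a ≤ exp ρ * ν a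
  have hbad : ∀ a ∈ Gᶜ, ρ * ν a ≤ ν a * |log (ν a / μ a)| := by
    intro a ha
    rcases (hν0 a).eq_or_lt with h0 | hpos
    · simp [← h0]
    have hlog : ρ < |log (ν a / μ a)| := by
      by_contra! hle
      exact mem_compl.1 ha (by simpa [G] using (abs_log_div_le_iff hpos (hμ0 a)).1 hle)
    rw [mul_comm]
    exact mul_le_mul_of_nonneg_left hlog.le hpos.le
  have hmass : ρ * ∑ a ∈ Gᶜ, ν a ≤ ρ * ρ := calc
    ρ * ∑ a ∈ Gᶜ, ν a ≤ ∑ a ∈ Gᶜ, ν a * |log (ν a / μ a)| := by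
      rw [mul_sum]
      exact sum_le_sum hbad
    _ ≤ ∑ a, ν a * |log (ν a / μ a)| :=
      sum_le_sum_of_subset_of_nonneg (subset_univ _) fun a _ _ =>
        mul_nonneg (hν0 a) (abs_nonneg _)
    _ ≤ ∑ a, ν a * log (ν a / μ a) + 2 / exp 1 := sum_mul_abs_log_div_le hν0 hμ0 hμ1
    _ ≤ ρ * ρ := by rwa [← sq]
  have hsplit := sum_add_sum_compl G ν
  linarith [le_of_mul_le_mul_left hmass hρ]
end
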